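/- arXiv:1106.2887 — 2 statements merged into one kernel-verified Lean document; each statement's English description precedes it below -/
import Mathlib

section
/- The first three bivariate copula L-moments have the representations: δ₁ = 2∫₀¹∫₀¹ C(u₁,u₂) du₁du₂ − 1/2, δ₂ = 6∫₀¹∫₀¹ (2u₂ − 1) C(u₁,u₂) du₁du₂ − 1/2, and δ₃ = ∫₀¹∫₀¹ (60u₂² − 60u₂ + 12) C(u₁,u₂) du₁du₂ − 1/2. -/
/-!
Write `C(u,v) = E[𝟙{U₁ ≤ u} 𝟙{U₂ ≤ v}]` and exchange the order of integration: for `Φ' = φ`,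
`∫₀¹∫₀¹ φ(v) C(u,v) du dv = E[(1 - U₁)(Φ(1) - Φ(U₂))]`. Expanding with `E U₁ = 1/2` and
`E Φ(U₂) = ∫₀¹ Φ` gives `Cov(U₁, Φ(U₂)) = ∫₀¹∫₀¹ φ C - (Φ(1) - ∫₀¹ Φ)/2`. For `Φ = P_k` the
correction is `1/2`, since `P_k(1) = 1` and `∫₀¹ P_k = 0`, and `P_1' = 2`, `P_2' = 6(2v - 1)`,
`P_3' = 60v² - 60v + 12`.
-/

open MeasureTheory Set

/-- The `k`-th shifted Legendre polynomial
`P_k(u) = ∑_{ℓ=0}^{k} (−1)^{k+ℓ} (k+ℓ)!/((ℓ!)² (k−ℓ)!) u^ℓ`. -/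
noncomputable def shiftedLegendre (k : ℕ) (u : ℝ) : ℝ :=
  ∑ l ∈ Finset.range (k + 1),
    (-1 : ℝ) ^ (k + l) * (Nat.factorial (k + l) : ℝ) /
      ((Nat.factorial l : ℝ) ^ 2 * (Nat.factorial (k - l) : ℝ)) * u ^ l

/-- The `k`-th bivariate copula L-moment `δ_k = Cov(U₁, P_k(U₂))` of `μ`. -/
noncomputable def copulaLMoment (μ : MeasureTheory.Measure (ℝ × ℝ)) (k : ℕ) : ℝ :=
  (∫ p, p.1 * shiftedLegendre k p.2 ∂μ)
    - (∫ p, p.1 ∂μ) * (∫ p, shiftedLegendre k p.2 ∂μ)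

open Function

lemma ae_mem_of_map_eq_restrict {α β : Type*} [MeasurableSpace α] [MeasurableSpace β]
    {μ : Measure α} {ν : Measure β} {X : α → β} (hX : AEMeasurable X μ) {s : Set β}
    (hs : MeasurableSet s) (h : μ.map X = ν.restrict s) : ∀ᵐ a ∂μ, X a ∈ s :=
  ae_of_ae_map hX (h ▸ ae_restrict_mem hs)

section MapEqUniform

variable {α : Type*} [MeasurableSpace α] {μ : Measure α} {X : α → ℝ} {a b : ℝ} {f : ℝ → ℝ}

lemma integrable_comp_of_map_eq_restrict_Icc (hX : AEMeasurable X μ)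
    (h : μ.map X = volume.restrict (Icc a b)) (hf : Continuous f) :
    Integrable (fun x => f (X x)) μ :=
  (integrable_map_measure (h ▸ hf.aestronglyMeasurable) hX).1 (h ▸ hf.integrableOn_Icc)

lemma integral_comp_of_map_eq_restrict_Icc (hX : AEMeasurable X μ)
    (h : μ.map X = volume.restrict (Icc a b)) (hf : Continuous f) (hab : a ≤ b) :
    ∫ x, f (X x) ∂μ = ∫ y in a..b, f y := by
  rw [← integral_map hX (h ▸ hf.aestronglyMeasurable), h, intervalIntegral.integral_of_le hab,
    integral_Icc_eq_integral_Ioc]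

end MapEqUniform

lemma setIntegral_Icc_indicator_Ici {a b x : ℝ} (hax : a ≤ x) (hxb : x ≤ b) (g : ℝ → ℝ) :
    ∫ v in Icc a b, (Ici x).indicator g v = ∫ v in x..b, g v := by
  rw [setIntegral_indicator measurableSet_Ici, ← Ici_inter_Iic, inter_right_comm, Ici_inter_Ici,
    max_eq_right hax, Ici_inter_Iic, integral_Icc_eq_integral_Ioc,
    intervalIntegral.integral_of_le hxb]

theorem integral_integral_mul_measureReal_Icc_prod {μ : Measure (ℝ × ℝ)} [IsFiniteMeasure μ]
    (hμ : ∀ᵐ p ∂μ, p ∈ Icc (0:ℝ) 1 ×ˢ Icc (0:ℝ) 1) {g : ℝ → ℝ} (hg : IntegrableOn g (Icc 0 1)) :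
    ∫ u in Icc (0:ℝ) 1, ∫ v in Icc (0:ℝ) 1, g v * μ.real (Icc 0 u ×ˢ Icc 0 v)
      = ∫ p, (1 - p.1) * (∫ v in p.2..1, g v) ∂μ := by
  set ν := (volume.restrict (Icc (0:ℝ) 1)).prod (volume.restrict (Icc (0:ℝ) 1))
  set T : Set ((ℝ × ℝ) × (ℝ × ℝ)) := {q | q.2 ∈ Icc 0 q.1.1 ×ˢ Icc 0 q.1.2}
  have hT : MeasurableSet T := by
    simp only [T, mem_prod, mem_Icc, ofPred_and]
    refine ((measurableSet_le ?_ ?_).inter (measurableSet_le ?_ ?_)).inter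
      ((measurableSet_le ?_ ?_).inter (measurableSet_le ?_ ?_)) <;> fun_prop
  set F : (ℝ × ℝ) → (ℝ × ℝ) → ℝ := fun w p => T.indicator (fun q => g q.1.2) (w, p)
  have hF : Integrable (uncurry F) (ν.prod μ) := ((hg.comp_snd _).comp_fst μ).indicator hT
  have inner_μ (w : ℝ × ℝ) : ∫ p, F w p ∂μ = g w.2 * μ.real (Icc 0 w.1 ×ˢ Icc 0 w.2) := by
    have : F w = (Icc 0 w.1 ×ˢ Icc 0 w.2).indicator (fun _ => g w.2) := rfl
    rw [this, integral_indicator_const _ (measurableSet_Icc.prod measurableSet_Icc), smul_eq_mul,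
      mul_comm]
  have inner_ν (p : ℝ × ℝ) (hp : p ∈ Icc (0:ℝ) 1 ×ˢ Icc (0:ℝ) 1) :
      ∫ w, F w p ∂ν = (1 - p.1) * ∫ v in p.2..1, g v := by
    obtain ⟨⟨hp₁, hp₁'⟩, ⟨hp₂, hp₂'⟩⟩ := hp
    have hFp (w : ℝ × ℝ) : F w p = (Ici p.1).indicator 1 w.1 * (Ici p.2).indicator g w.2 := by
      by_cases h₁ : p.1 ≤ w.1 <;> by_cases h₂ : p.2 ≤ w.2 <;>
        simp [F, T, indicator_apply, Prod.le_def, h₁, h₂, hp₁, hp₂]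
    simp_rw [hFp]
    rw [integral_prod_mul, setIntegral_Icc_indicator_Ici hp₁ hp₁',
      setIntegral_Icc_indicator_Ici hp₂ hp₂']
    simp
  have hF_left : Integrable (fun w => g w.2 * μ.real (Icc 0 w.1 ×ˢ Icc 0 w.2)) ν := by
    simpa only [uncurry_apply_pair, inner_μ] using hF.integral_prod_left
  calc _ = ∫ w, g w.2 * μ.real (Icc 0 w.1 ×ˢ Icc 0 w.2) ∂ν := (integral_prod _ hF_left).symm
    _ = ∫ w, ∫ p, F w p ∂μ ∂ν := by simp_rw [inner_μ]
    _ = ∫ p, ∫ w, F w p ∂ν ∂μ := integral_integral_swap hF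
    _ = _ := integral_congr_ae (hμ.mono inner_ν)

section UniformMarginals

variable {μ : Measure (ℝ × ℝ)} [IsProbabilityMeasure μ]

theorem integral_fst_mul_sub_eq_integral_deriv_mul_measureReal
    (h1 : μ.map Prod.fst = volume.restrict (Icc (0:ℝ) 1))
    (h2 : μ.map Prod.snd = volume.restrict (Icc (0:ℝ) 1)) {Φ φ : ℝ → ℝ}
    (hΦ : ∀ x, HasDerivAt Φ (φ x) x) (hφ : IntegrableOn φ (Icc 0 1)) :
    (∫ p, p.1 * Φ p.2 ∂μ) - (∫ p, p.1 ∂μ) * (∫ p, Φ p.2 ∂μ)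
      = (∫ u in (0:ℝ)..1, ∫ v in (0:ℝ)..1, φ v * μ.real (Icc 0 u ×ˢ Icc 0 v))
        - (Φ 1 - ∫ x in (0:ℝ)..1, Φ x) / 2 := by
  have hΦc : Continuous Φ := continuous_iff_continuousAt.2 fun x => (hΦ x).continuousAt
  have hfst := ae_mem_of_map_eq_restrict measurable_fst.aemeasurable measurableSet_Icc h1
  have hsnd := ae_mem_of_map_eq_restrict measurable_snd.aemeasurable measurableSet_Icc h2
  have hU : Integrable (fun p : ℝ × ℝ => p.1) μ :=
    integrable_comp_of_map_eq_restrict_Icc measurable_fst.aemeasurable h1 continuous_id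
  have hV : Integrable (fun p : ℝ × ℝ => Φ p.2) μ :=
    integrable_comp_of_map_eq_restrict_Icc measurable_snd.aemeasurable h2 hΦc
  have hUV : Integrable (fun p : ℝ × ℝ => p.1 * Φ p.2) μ := by
    refine hV.bdd_mul measurable_fst.aestronglyMeasurable (c := 1) ?_
    filter_upwards [hfst] with p hp
    rw [Real.norm_eq_abs, abs_le]
    exact ⟨by linarith [hp.1], hp.2⟩
  have EU : ∫ p, p.1 ∂μ = 1 / 2 := by
    rw [integral_comp_of_map_eq_restrict_Icc (f := fun x => x) measurable_fst.aemeasurable h1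
      continuous_id zero_le_one, integral_id]
    norm_num
  have EV : ∫ p, Φ p.2 ∂μ = ∫ x in (0:ℝ)..1, Φ x :=
    integral_comp_of_map_eq_restrict_Icc measurable_snd.aemeasurable h2 hΦc zero_le_one
  have fubini : ∫ u in (0:ℝ)..1, ∫ v in (0:ℝ)..1, φ v * μ.real (Icc 0 u ×ˢ Icc 0 v)
      = ∫ p, (1 - p.1) * (Φ 1 - Φ p.2) ∂μ := by
    simp_rw [intervalIntegral.integral_of_le zero_le_one, ← integral_Icc_eq_integral_Ioc]
    rw [integral_integral_mul_measureReal_Icc_prod (hfst.and hsnd) hφ]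
    refine integral_congr_ae ?_
    filter_upwards [hsnd] with p hp
    rw [intervalIntegral.integral_eq_sub_of_hasDerivAt (fun x _ => hΦ x)
      (hφ.mono_set (uIcc_subset_Icc hp ⟨zero_le_one, le_rfl⟩)).intervalIntegrable]
  have expand : ∫ p, (1 - p.1) * (Φ 1 - Φ p.2) ∂μ
      = Φ 1 - Φ 1 * (∫ p, p.1 ∂μ) - (∫ p, Φ p.2 ∂μ) + ∫ p, p.1 * Φ p.2 ∂μ := by
    have : (fun p : ℝ × ℝ => (1 - p.1) * (Φ 1 - Φ p.2))
        = fun p => Φ 1 - Φ 1 * p.1 - Φ p.2 + p.1 * Φ p.2 := by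
      ext p; ring
    rw [this, integral_add _ hUV, integral_sub _ hV, integral_sub (integrable_const _)
      (hU.const_mul _), integral_const, integral_const_mul]
    · simp
    · exact (integrable_const _).sub (hU.const_mul _)
    · exact ((integrable_const _).sub (hU.const_mul _)).sub hV
  rw [fubini, expand, EU, EV]
  ring

theorem copulaLMoment_eq_integral_deriv_mul_sub_half
    (h1 : μ.map Prod.fst = volume.restrict (Icc (0:ℝ) 1))
    (h2 : μ.map Prod.snd = volume.restrict (Icc (0:ℝ) 1)) {k : ℕ} {φ : ℝ → ℝ}
    (hP : ∀ x, HasDerivAt (shiftedLegendre k) (φ x) x) (hφ : Continuous φ)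
    (hP1 : shiftedLegendre k 1 = 1) (hP0 : ∫ x in (0:ℝ)..1, shiftedLegendre k x = 0) :
    copulaLMoment μ k
      = (∫ u in (0:ℝ)..1, ∫ v in (0:ℝ)..1, φ v * μ.real (Icc 0 u ×ˢ Icc 0 v)) - 1 / 2 := by
  rw [copulaLMoment, integral_fst_mul_sub_eq_integral_deriv_mul_measureReal h1 h2 hP
    hφ.integrableOn_Icc, hP1, hP0]
  norm_num

end UniformMarginals

lemma shiftedLegendre_one : shiftedLegendre 1 = fun u => 2 * u - 1 := by
  ext u
  norm_num [shiftedLegendre, Finset.sum_range_succ]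
  ring

lemma shiftedLegendre_two : shiftedLegendre 2 = fun u => 6 * u ^ 2 - 6 * u + 1 := by
  ext u
  norm_num [shiftedLegendre, Finset.sum_range_succ, Nat.factorial]
  ring

lemma shiftedLegendre_three :
    shiftedLegendre 3 = fun u => 20 * u ^ 3 - 30 * u ^ 2 + 12 * u - 1 := by
  ext u
  norm_num [shiftedLegendre, Finset.sum_range_succ, Nat.factorial]
  ring

lemma hasDerivAt_shiftedLegendre_one (x : ℝ) : HasDerivAt (shiftedLegendre 1) 2 x := by
  rw [shiftedLegendre_one]
  exact ((hasDerivAt_id x).const_mul 2).sub_const 1 |>.congr_deriv (mul_one 2)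

lemma hasDerivAt_shiftedLegendre_two (x : ℝ) :
    HasDerivAt (shiftedLegendre 2) (6 * (2 * x - 1)) x := by
  rw [shiftedLegendre_two]
  exact (((hasDerivAt_pow 2 x).const_mul 6).sub ((hasDerivAt_id x).const_mul 6)).add_const 1
    |>.congr_deriv (by norm_num; ring)

lemma hasDerivAt_shiftedLegendre_three (x : ℝ) :
    HasDerivAt (shiftedLegendre 3) (60 * x ^ 2 - 60 * x + 12) x := by
  rw [shiftedLegendre_three]
  exact ((((hasDerivAt_pow 3 x).const_mul 20).sub ((hasDerivAt_pow 2 x).const_mul 30)).add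
    ((hasDerivAt_id x).const_mul 12)).sub_const 1 |>.congr_deriv (by norm_num; ring)

lemma integral_shiftedLegendre_one : ∫ x in (0:ℝ)..1, shiftedLegendre 1 x = 0 := by
  simp (disch := (apply Continuous.intervalIntegrable; fun_prop)) only [shiftedLegendre_one,
    intervalIntegral.integral_sub, intervalIntegral.integral_const]
  rw [intervalIntegral.integral_const_mul]
  norm_num

lemma integral_shiftedLegendre_two : ∫ x in (0:ℝ)..1, shiftedLegendre 2 x = 0 := by
  simp (disch := (apply Continuous.intervalIntegrable; fun_prop)) only [shiftedLegendre_two,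
    intervalIntegral.integral_add, intervalIntegral.integral_sub,
    intervalIntegral.integral_const_mul, integral_pow, intervalIntegral.integral_const]
  rw [intervalIntegral.integral_const_mul]
  norm_num

lemma integral_shiftedLegendre_three : ∫ x in (0:ℝ)..1, shiftedLegendre 3 x = 0 := by
  simp (disch := (apply Continuous.intervalIntegrable; fun_prop)) only [shiftedLegendre_three,
    intervalIntegral.integral_add, intervalIntegral.integral_sub,
    intervalIntegral.integral_const_mul, integral_pow, intervalIntegral.integral_const]
  rw [intervalIntegral.integral_const_mul]
  norm_num

/-- The first three bivariate copula L-moments of a copula measure `μ` with joint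
distribution function `C` admit the representations
`δ₁ = 2∫₀¹∫₀¹ C − 1/2`, `δ₂ = 6∫₀¹∫₀¹ (2u₂−1)C − 1/2`,
`δ₃ = ∫₀¹∫₀¹ (60u₂²−60u₂+12)C − 1/2`. -/
theorem first_three_copula_Lmoments
    (μ : Measure (ℝ × ℝ)) [IsProbabilityMeasure μ]
    (h1 : μ.map Prod.fst = volume.restrict (Icc (0:ℝ) 1))
    (h2 : μ.map Prod.snd = volume.restrict (Icc (0:ℝ) 1))
    (C : ℝ → ℝ → ℝ)
    (hC : ∀ u v : ℝ, C u v = (μ (Icc 0 u ×ˢ Icc 0 v)).toReal) :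
    copulaLMoment μ 1
        = 2 * (∫ u in (0:ℝ)..1, ∫ v in (0:ℝ)..1, C u v) - 1/2 ∧
    copulaLMoment μ 2
        = 6 * (∫ u in (0:ℝ)..1, ∫ v in (0:ℝ)..1, (2*v - 1) * C u v) - 1/2 ∧
    copulaLMoment μ 3
        = (∫ u in (0:ℝ)..1, ∫ v in (0:ℝ)..1, (60*v^2 - 60*v + 12) * C u v) - 1/2 := by
  have hC' (u v : ℝ) : μ.real (Icc 0 u ×ˢ Icc 0 v) = C u v := (hC u v).symm
  refine ⟨?_, ?_, ?_⟩
  · rw [copulaLMoment_eq_integral_deriv_mul_sub_half h1 h2 hasDerivAt_shiftedLegendre_one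
      continuous_const (by norm_num [shiftedLegendre_one]) integral_shiftedLegendre_one]
    simp only [hC', intervalIntegral.integral_const_mul]
  · rw [copulaLMoment_eq_integral_deriv_mul_sub_half h1 h2 hasDerivAt_shiftedLegendre_two
      (by fun_prop) (by norm_num [shiftedLegendre_two]) integral_shiftedLegendre_two]
    simp only [hC', mul_assoc, intervalIntegral.integral_const_mul]
  · rw [copulaLMoment_eq_integral_deriv_mul_sub_half h1 h2 hasDerivAt_shiftedLegendre_three
      (by fun_prop) (by norm_num [shiftedLegendre_three]) integral_shiftedLegendre_three]
    simp only [hC']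
end

section
/- For the one-iterated FGM copula with parameters (α₁,α₂), Kendall's tau equals τ(α₁,α₂) = 4 ∫₀¹∫₀¹ C_{α₁,α₂}(u,v) · c_{α₁,α₂}(u,v) du dv − 1 = 2α₁/9 + α₂/18 + α₁α₂/450, where c_{α₁,α₂}(u,v) = 1 + α₁(1−2u)(1−2v) + α₂(2u−3u²)(2v−3v²) is the mixed second partial derivative ∂²C_{α₁,α₂}/∂u∂v. -/
/-! The copula and its density are separable sums with the same weights `w = (1, α₁, α₂)`:
`C(u,v) = ∑ wᵢ φᵢ(u) φᵢ(v)` and `c(u,v) = ∑ wᵢ φᵢ'(u) φᵢ'(v)` with `φ = (x, x(1-x), x²(1-x))`.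
Hence `∫∫ C c = ∑ᵢⱼ wᵢ wⱼ mᵢⱼ²` with `mᵢⱼ = ∫₀¹ φᵢ φⱼ'`, and only these nine polynomial
integrals remain to be computed. -/

theorem intervalIntegral.integral_integral_sum_mul {κ : Type*} (s : Finset κ)
    (f g : κ → ℝ → ℝ) (hf : ∀ k ∈ s, Continuous (f k)) (hg : ∀ k ∈ s, Continuous (g k))
    (a b : ℝ) :
    ∫ u in a..b, ∫ v in a..b, ∑ k ∈ s, f k u * g k v
      = ∑ k ∈ s, (∫ u in a..b, f k u) * ∫ v in a..b, g k v := by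
  have inner (u : ℝ) : ∫ v in a..b, ∑ k ∈ s, f k u * g k v
      = ∑ k ∈ s, f k u * ∫ v in a..b, g k v := by
    rw [intervalIntegral.integral_finsetSum fun k hk =>
      ((hg k hk).const_mul _).intervalIntegrable a b]
    simp only [intervalIntegral.integral_const_mul]
  simp only [inner]
  rw [intervalIntegral.integral_finsetSum fun k hk =>
    ((hf k hk).mul_const _).intervalIntegrable a b]
  simp only [intervalIntegral.integral_mul_const]

theorem intervalIntegral.integral_integral_sum_mul_sum {ι : Type*} (s : Finset ι) (w : ι → ℝ)
    (φ ψ : ι → ℝ → ℝ) (hφ : ∀ i ∈ s, Continuous (φ i)) (hψ : ∀ i ∈ s, Continuous (ψ i))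
    (a b : ℝ) :
    ∫ u in a..b, ∫ v in a..b,
        (∑ i ∈ s, w i * φ i u * φ i v) * ∑ j ∈ s, w j * ψ j u * ψ j v
      = ∑ i ∈ s, ∑ j ∈ s, w i * w j * (∫ t in a..b, φ i t * ψ j t) ^ 2 := by
  have separate (u v : ℝ) :
      (∑ i ∈ s, w i * φ i u * φ i v) * (∑ j ∈ s, w j * ψ j u * ψ j v)
        = ∑ p ∈ s ×ˢ s, (w p.1 * w p.2 * (φ p.1 u * ψ p.2 u)) * (φ p.1 v * ψ p.2 v) := by
    rw [Finset.sum_mul_sum, Finset.sum_product]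
    exact Finset.sum_congr rfl fun i _ => Finset.sum_congr rfl fun j _ => by ring
  simp only [separate]
  rw [intervalIntegral.integral_integral_sum_mul, Finset.sum_product]
  · refine Finset.sum_congr rfl fun i _ => Finset.sum_congr rfl fun j _ => ?_
    rw [intervalIntegral.integral_const_mul]
    ring
  · intro p hp
    rw [Finset.mem_product] at hp
    exact continuous_const.mul ((hφ _ hp.1).mul (hψ _ hp.2))
  · intro p hp
    rw [Finset.mem_product] at hp
    exact (hφ _ hp.1).mul (hψ _ hp.2)

def iteratedFGMBasis : Fin 3 → ℝ → ℝ :=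
  ![fun x => x, fun x => x * (1 - x), fun x => x ^ 2 * (1 - x)]

def iteratedFGMBasisDeriv : Fin 3 → ℝ → ℝ :=
  ![fun _ => 1, fun x => 1 - 2 * x, fun x => 2 * x - 3 * x ^ 2]

theorem continuous_iteratedFGMBasis (i : Fin 3) : Continuous (iteratedFGMBasis i) := by
  fin_cases i <;>
    simp only [iteratedFGMBasis, Fin.zero_eta, Fin.mk_one, Fin.reduceFinMk, Matrix.cons_val_zero,
      Matrix.cons_val_one, Matrix.cons_val] <;>
    fun_prop

theorem continuous_iteratedFGMBasisDeriv (i : Fin 3) : Continuous (iteratedFGMBasisDeriv i) := by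
  fin_cases i <;>
    simp only [iteratedFGMBasisDeriv, Fin.zero_eta, Fin.mk_one, Fin.reduceFinMk, Matrix.cons_val_zero,
      Matrix.cons_val_one, Matrix.cons_val] <;>
    fun_prop

theorem iteratedFGM_copula_eq_sum (α₁ α₂ u v : ℝ) :
    u * v * (1 + α₁ * (1 - u) * (1 - v) + α₂ * u * v * (1 - u) * (1 - v))
      = ∑ i, ![1, α₁, α₂] i * iteratedFGMBasis i u * iteratedFGMBasis i v := by
  simp only [Fin.sum_univ_three, iteratedFGMBasis, Matrix.cons_val_zero, Matrix.cons_val_one,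
    Matrix.cons_val_two, Matrix.tail_cons, Matrix.head_cons]
  ring

theorem iteratedFGM_density_eq_sum (α₁ α₂ u v : ℝ) :
    1 + α₁ * (1 - 2*u) * (1 - 2*v) + α₂ * (2*u - 3*u^2) * (2*v - 3*v^2)
      = ∑ i, ![1, α₁, α₂] i * iteratedFGMBasisDeriv i u * iteratedFGMBasisDeriv i v := by
  simp only [Fin.sum_univ_three, iteratedFGMBasisDeriv, Matrix.cons_val_zero, Matrix.cons_val_one,
    Matrix.cons_val_two, Matrix.tail_cons, Matrix.head_cons]
  ring

theorem integral_iteratedFGMBasis_mul_iteratedFGMBasisDeriv (i j : Fin 3) :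
    ∫ t in (0:ℝ)..1, iteratedFGMBasis i t * iteratedFGMBasisDeriv j t
      = !![1/2, -1/6, -1/12; 1/6, 0, 1/60; 1/12, -1/60, 0] i j := by
  fin_cases i <;> fin_cases j <;>
    simp only [iteratedFGMBasis, iteratedFGMBasisDeriv, Matrix.of_apply, Fin.zero_eta, Fin.mk_one,
      Fin.reduceFinMk, Matrix.cons_val', Matrix.cons_val_fin_one, Matrix.cons_val_zero,
      Matrix.cons_val_one, Matrix.cons_val] <;>
    ring_nf <;>
    simp (disch := exact Continuous.intervalIntegrable (by fun_prop) _ _) only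
      [intervalIntegral.integral_add, intervalIntegral.integral_sub,
        intervalIntegral.integral_mul_const, integral_pow, integral_id] <;> norm_num

/-- For the one-iterated FGM copula `C(u,v) = uv(1 + α₁(1−u)(1−v) + α₂uv(1−u)(1−v))`
with density `c(u,v) = 1 + α₁(1−2u)(1−2v) + α₂(2u−3u²)(2v−3v²)`, Kendall's tau equals
`τ = 4∫₀¹∫₀¹ C(u,v)·c(u,v) du dv − 1 = 2α₁/9 + α₂/18 + α₁α₂/450`. -/
theorem iteratedFGM_kendall_tau (α₁ α₂ : ℝ) :
    4 * (∫ u in (0:ℝ)..1, ∫ v in (0:ℝ)..1,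
        (u * v * (1 + α₁ * (1 - u) * (1 - v) + α₂ * u * v * (1 - u) * (1 - v)))
          * (1 + α₁ * (1 - 2*u) * (1 - 2*v)
              + α₂ * (2*u - 3*u^2) * (2*v - 3*v^2))) - 1
      = 2 * α₁ / 9 + α₂ / 18 + α₁ * α₂ / 450 := by
  simp_rw [iteratedFGM_copula_eq_sum, iteratedFGM_density_eq_sum]
  rw [intervalIntegral.integral_integral_sum_mul_sum _ _ _ _
    (fun i _ => continuous_iteratedFGMBasis i) (fun i _ => continuous_iteratedFGMBasisDeriv i)]
  simp only [Fin.sum_univ_three, integral_iteratedFGMBasis_mul_iteratedFGMBasisDeriv,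
    Matrix.of_apply, Matrix.cons_val_zero, Matrix.cons_val_one, Matrix.cons_val_two,
    Matrix.tail_cons, Matrix.head_cons]
  ring
end
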